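/- arXiv:1406.2145 — 2 statements merged into one kernel-verified Lean document; each statement's English description precedes it below -/
import Mathlib

section
/- For a prime ideal q of B not containing J, the localization of A ⋈^f J at the prime q̄^f := {(a, f(a)+j) | a ∈ A, j ∈ J, f(a)+j ∈ q} is isomorphic as a ring to the localization B_q. -/
set_option synthInstance.maxHeartbeats 1000000
set_option maxHeartbeats 1000000
/-- The amalgamation `A ⋈^f J` of `A` with `B` along `J` with respect to `f`,
as a subring of `A × B`. -/
def Amalg {A B : Type*} [CommRing A] [CommRing B] (f : A →+* B) (J : Ideal B) :
    Subring (A × B) where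
  carrier := {p | ∃ a : A, ∃ j ∈ J, p = (a, f a + j)}
  zero_mem' := ⟨0, 0, J.zero_mem, by simp [Prod.ext_iff]⟩
  one_mem' := ⟨1, 0, J.zero_mem, by simp [Prod.ext_iff]⟩
  add_mem' := by
    rintro _ _ ⟨a, j, hj, rfl⟩ ⟨a', j', hj', rfl⟩
    exact ⟨a + a', j + j', J.add_mem hj hj', by simp [Prod.ext_iff]; ring⟩
  neg_mem' := by
    rintro _ ⟨a, j, hj, rfl⟩
    exact ⟨-a, -j, J.neg_mem hj, by simp [Prod.ext_iff]; ring⟩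
  mul_mem' := by
    rintro _ _ ⟨a, j, hj, rfl⟩ ⟨a', j', hj', rfl⟩
    refine ⟨a * a', f a * j' + f a' * j + j * j',
      J.add_mem (J.add_mem (J.mul_mem_left _ hj') (J.mul_mem_left _ hj))
        (J.mul_mem_left _ hj'), by simp [Prod.ext_iff]; ring⟩

/-! Choose `j ∈ J \ q` and set `e = (0, j) ∈ A ⋈^f J`. Multiplication by `e` annihilates the kernel
of the projection `A ⋈^f J → B` and carries all of `B` into its image, since `(0, b j)` lies in
`A ⋈^f J`. As `e ∉ q̄^f`, inverting the complement of `q̄^f = q.comap snd` therefore already yields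
`B_q`. -/

theorem IsLocalization.atPrime_comap_of_mul_mem_range {R B S : Type*} [CommRing R] [CommRing B]
    [CommRing S] [Algebra R B] [Algebra B S] [Algebra R S] [IsScalarTower R B S]
    (q : Ideal B) [q.IsPrime] [IsLocalization.AtPrime S q] (e : R)
    (he : algebraMap R B e ∉ q)
    (hrange : ∀ b : B, b * algebraMap R B e ∈ (algebraMap R B).range)
    (hker : ∀ x : R, algebraMap R B x = 0 → e * x = 0) :
    IsLocalization.AtPrime S (q.comap (algebraMap R B)) := by
  choose lift hlift using hrange
  have lift_mem (b : B) (hb : b ∉ q) : lift b ∈ (q.comap (algebraMap R B)).primeCompl := by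
    simpa [hlift] using fun h => (Ideal.IsPrime.mem_or_mem ‹_› h).elim hb he
  refine ⟨fun y => ?_, fun z => ?_, fun {x y} hxy => ?_⟩
  · rw [IsScalarTower.algebraMap_apply R B S]
    exact IsLocalization.map_units S (⟨_, y.2⟩ : q.primeCompl)
  · obtain ⟨⟨b, t⟩, h⟩ := IsLocalization.surj q.primeCompl z
    refine ⟨⟨lift b, ⟨lift t, lift_mem t t.2⟩⟩, ?_⟩
    simp only [IsScalarTower.algebraMap_apply R B S, hlift, map_mul, ← h]
    ring
  · simp only [IsScalarTower.algebraMap_apply R B S] at hxy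
    obtain ⟨c, hc⟩ := IsLocalization.exists_of_eq (M := q.primeCompl) hxy
    have hdiff : e * (lift c * (x - y)) = 0 := hker _ (by
      rw [map_mul, map_sub, hlift, mul_sub, mul_right_comm, hc]; ring)
    exact ⟨⟨e * lift c, mul_mem he (lift_mem c c.2)⟩, by linear_combination hdiff⟩

namespace Amalg

variable {A B : Type*} [CommRing A] [CommRing B] (f : A →+* B) (J : Ideal B)

instance : Algebra (Amalg f J) B := ((RingHom.snd A B).comp (Amalg f J).subtype).toAlgebra

variable {f J}

theorem zero_mk_mem {j : B} (hj : j ∈ J) : ((0 : A), j) ∈ Amalg f J :=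
  ⟨0, j, hj, by simp⟩

theorem isLocalization_atPrime_comap {q : Ideal B} [q.IsPrime] (hJq : ¬ J ≤ q) :
    IsLocalization.AtPrime (Localization.AtPrime q) (q.comap (algebraMap (Amalg f J) B)) := by
  obtain ⟨j, hjJ, hjq⟩ := SetLike.not_le_iff_exists.mp hJq
  refine IsLocalization.atPrime_comap_of_mul_mem_range q ⟨_, zero_mk_mem hjJ⟩ hjq
    (fun b => ⟨⟨_, zero_mk_mem (J.mul_mem_left b hjJ)⟩, rfl⟩) fun x hx => ?_
  ext
  · exact zero_mul _
  · exact (congrArg (j * ·) hx).trans (mul_zero j)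

end Amalg

/-- For a prime `q` of `B` not containing `J`, the localization of `A ⋈^f J` at
`q̄^f = {(a, f(a)+j) | f(a)+j ∈ q}` is isomorphic to `B_q`. -/
theorem amalgamation_localization_at_qbar {A B : Type*} [CommRing A] [CommRing B]
    (f : A →+* B) (J : Ideal B) (q : Ideal B) [hq : q.IsPrime] (hJq : ¬ J ≤ q)
    (Q : Ideal (Amalg f J)) [hQ : Q.IsPrime]
    (hQ2 : (Q : Set (Amalg f J)) = {x : Amalg f J | (x : A × B).2 ∈ q}) :
    Nonempty (Localization.AtPrime Q ≃+* Localization.AtPrime q) := by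
  have hQq : Q = q.comap (algebraMap (Amalg f J) B) := SetLike.coe_injective hQ2
  have : IsLocalization.AtPrime (Localization.AtPrime q) Q :=
    hQq ▸ Amalg.isLocalization_atPrime_comap hJq
  exact ⟨(IsLocalization.algEquiv Q.primeCompl _ (Localization.AtPrime q)).toRingEquiv⟩
end

section
/- If J is finitely generated as an A-module (via f), then A ⋈^f J is Noetherian if and only if A is Noetherian. -/
set_option synthInstance.maxHeartbeats 1000000
set_option maxHeartbeats 1000000
/-- The amalgamation as a subalgebra of `A × B`, when `B` is an `A`-algebra. -/
def AmalgA (A : Type*) {B : Type*} [CommRing A] [CommRing B] [Algebra A B] (J : Ideal B) :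
    Subalgebra A (A × B) :=
  { Amalg (algebraMap A B) J with
    algebraMap_mem' := fun a => ⟨a, 0, J.zero_mem, by simp⟩ }

/-! As an `A`-module, `A ⋈^f J = A·(1, 1) + (0 × J)`, so a finitely generated `J` makes
`A ⋈^f J` a finite `A`-algebra, which is Noetherian over a Noetherian `A`. Conversely `A` is
a quotient of `A ⋈^f J` through the first projection. -/

namespace AmalgA

variable {A B : Type*} [CommRing A] [CommRing B] [Algebra A B] (J : Ideal B)

theorem mem_iff {p : A × B} :
    p ∈ AmalgA A J ↔ ∃ a : A, ∃ j ∈ J, p = (a, algebraMap A B a + j) :=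
  Iff.rfl

theorem toSubmodule_eq : Subalgebra.toSubmodule (AmalgA A J) =
    Submodule.span A {1} ⊔ (J.restrictScalars A).map (LinearMap.inr A A B) := by
  ext p
  simp only [Subalgebra.mem_toSubmodule, mem_iff, Submodule.mem_sup,
    Submodule.mem_span_singleton, Submodule.mem_map, Submodule.restrictScalars_mem,
    LinearMap.inr_apply]
  constructor
  · rintro ⟨a, j, hj, rfl⟩
    exact ⟨_, ⟨a, rfl⟩, _, ⟨j, hj, rfl⟩, by simp [Algebra.smul_def]⟩
  · rintro ⟨_, ⟨a, rfl⟩, _, ⟨j, hj, rfl⟩, rfl⟩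
    exact ⟨a, j, hj, by simp [Algebra.smul_def]⟩

theorem finite_of_fg (hJ : (J.restrictScalars A).FG) : Module.Finite A (AmalgA A J) := by
  have hfg : (Subalgebra.toSubmodule (AmalgA A J)).FG := by
    rw [toSubmodule_eq]
    exact (Submodule.fg_span_singleton 1).sup (hJ.map _)
  exact Module.Finite.iff_fg.mpr hfg

theorem fst_surjective :
    Function.Surjective ((AlgHom.fst A A B).comp (AmalgA A J).val) :=
  fun a => ⟨⟨(a, algebraMap A B a), a, 0, J.zero_mem, by simp⟩, rfl⟩

end AmalgA

/-- If `J` is finitely generated as an `A`-module, then `A ⋈^f J` is Noetherian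
iff `A` is Noetherian. -/
theorem amalgamation_isNoetherianRing_iff {A B : Type*} [CommRing A] [CommRing B]
    [Algebra A B] (J : Ideal B) (hfg : (Submodule.restrictScalars A J).FG) :
    IsNoetherianRing (AmalgA A J) ↔ IsNoetherianRing A := by
  refine ⟨fun _ => isNoetherianRing_of_surjective _ _ _ (AmalgA.fst_surjective J),
    fun _ => ?_⟩
  have := AmalgA.finite_of_fg J hfg
  exact isNoetherian_of_tower A inferInstance
end
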